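/- Let 0 < α < 1, λ ∈ ℝ, τ > 0, and (v^k)_{k≥0} a real sequence with v^{-1} = 0. Then for every n ≥ 1: v^n · δ_t^{α,λ} v^n ≥ (1/2) e^{-(α/2)λτ} δ_t^{α,2λ}(v^n)² + (e^{-(α/2)λτ}/(2 l_0^α)) τ^α (δ_t^{α,λ} v^n)², where δ_t^{α,λ} v^n = τ^{-α} ∑_{k=0}^n e^{-(k-α/2)λτ} g_k^α v^{n-k} and δ_t^{α,2λ}(v^n)² = τ^{-α} ∑_{k=0}^n e^{-(k-α/2)·2λτ} g_k^α (v^{n-k})². -/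

import Mathlib

noncomputable def binom (α : ℝ) (k : ℕ) : ℝ :=
  (∏ i ∈ Finset.range k, (α - i)) / (Nat.factorial k)

noncomputable def g (α : ℝ) (k : ℕ) : ℝ := (-1) ^ k * binom α k

noncomputable def lcoef (α : ℝ) (n : ℕ) : ℝ := ∑ j ∈ Finset.range (n + 1), g α j

/-- `δ_t^{α,λ} v^n = τ^{-α} ∑_{k=0}^n e^{-(k-α/2)λτ} g_k^α v^{n-k}`. -/
noncomputable def delta (α lam τ : ℝ) (v : ℕ → ℝ) (n : ℕ) : ℝ :=
  τ ^ (-α) * ∑ k ∈ Finset.range (n + 1),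
    Real.exp (-((k : ℝ) - α / 2) * lam * τ) * g α k * v (n - k)

/-!
Factor `τ^{-α} e^{(α/2)λτ}` out of `δ_t^{α,λ} v^n` and write `x_k = e^{-kλτ} v^{n-k}`, so that
`δ_t^{α,λ} v^n ∝ ∑ g_k x_k` and `δ_t^{α,2λ} (v^n)² ∝ ∑ g_k x_k²` with `x_0 = v^n`. The claim becomes
`(∑ g_k x_k)² + ∑ g_k x_k² ≤ 2 x_0 ∑ g_k x_k`. Splitting off `g_0 = 1`, this is `S² ≤ -T` for the
tails `S = ∑_{k≥1} g_k x_k`, `T = ∑_{k≥1} g_k x_k²`. Since `g_k ≤ 0` for `k ≥ 1`, Cauchy–Schwarz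
with the weights `-g_k` gives `S² ≤ (1 - l_n)(-T)`, and `0 ≤ l_n ≤ 1` finishes.
-/

open Finset

namespace Finset

theorem sq_sum_mul_add_sum_mul_sq_le {c x : ℕ → ℝ} {n : ℕ} (hc₀ : c 0 = 1)
    (hc : ∀ k < n, c (k + 1) ≤ 0) (hsum : 0 ≤ ∑ k ∈ range (n + 1), c k) :
    (∑ k ∈ range (n + 1), c k * x k) ^ 2 + ∑ k ∈ range (n + 1), c k * x k ^ 2 ≤
      2 * x 0 * ∑ k ∈ range (n + 1), c k * x k := by
  have hw : ∀ k ∈ range n, 0 ≤ -c (k + 1) := fun k hk => neg_nonneg.2 (hc k (mem_range.1 hk))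
  have hT : 0 ≤ ∑ k ∈ range n, -c (k + 1) * x (k + 1) ^ 2 :=
    sum_nonneg fun k hk => mul_nonneg (hw k hk) (sq_nonneg _)
  have hCS : (∑ k ∈ range n, -c (k + 1) * x (k + 1)) ^ 2 ≤
      (∑ k ∈ range n, -c (k + 1)) * ∑ k ∈ range n, -c (k + 1) * x (k + 1) ^ 2 :=
    sum_sq_le_sum_mul_sum_of_sq_le_mul _ hw (fun k hk => mul_nonneg (hw k hk) (sq_nonneg _))
      fun k _ => le_of_eq (by ring)
  have hW : ∑ k ∈ range n, -c (k + 1) ≤ 1 := by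
    rw [sum_range_succ', hc₀] at hsum
    rw [sum_neg_distrib]
    linarith
  have hS : (∑ k ∈ range n, c (k + 1) * x (k + 1)) ^ 2 ≤
      -∑ k ∈ range n, c (k + 1) * x (k + 1) ^ 2 := by
    simpa only [neg_mul, sum_neg_distrib, neg_sq] using hCS.trans (mul_le_of_le_one_left hT hW)
  simp only [sum_range_succ' _ n, hc₀, one_mul]
  nlinarith

end Finset

theorem g_zero (α : ℝ) : g α 0 = 1 := by simp [g, binom]

theorem g_succ (α : ℝ) (k : ℕ) :
    g α (k + 1) = -(α * ∏ i ∈ range k, ((i : ℝ) + 1 - α)) / (k + 1).factorial := by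
  have hsign :
      ∏ i ∈ range k, ((i : ℝ) + 1 - α) = (-1) ^ k * ∏ i ∈ range k, (α - ((i : ℝ) + 1)) := by
    simpa only [neg_sub, card_range] using prod_neg (s := range k) fun i : ℕ => α - ((i : ℝ) + 1)
  rw [g, binom, prod_range_succ', hsign]
  push_cast
  field_simp
  ring

theorem prod_range_add_one_sub_nonneg {α : ℝ} (hα : α ≤ 1) (k : ℕ) :
    0 ≤ ∏ i ∈ range k, ((i : ℝ) + 1 - α) :=
  prod_nonneg fun i _ => by linarith [(Nat.cast_nonneg i : (0 : ℝ) ≤ i)]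

theorem g_succ_nonpos {α : ℝ} (hα₀ : 0 ≤ α) (hα₁ : α ≤ 1) (k : ℕ) : g α (k + 1) ≤ 0 := by
  rw [g_succ, neg_div]
  exact neg_nonpos.2 <|
    div_nonneg (mul_nonneg hα₀ (prod_range_add_one_sub_nonneg hα₁ k)) (Nat.cast_nonneg _)

theorem lcoef_zero (α : ℝ) : lcoef α 0 = 1 := by simp [lcoef, g_zero]

theorem lcoef_eq (α : ℝ) (n : ℕ) :
    lcoef α n = (∏ i ∈ range n, ((i : ℝ) + 1 - α)) / n.factorial := by
  induction n with
  | zero => simp [lcoef_zero]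
  | succ n ih =>
    rw [lcoef, sum_range_succ, ← lcoef, ih, g_succ, prod_range_succ, Nat.factorial_succ]
    push_cast
    field_simp
    ring

theorem lcoef_nonneg {α : ℝ} (hα : α ≤ 1) (n : ℕ) : 0 ≤ lcoef α n := by
  rw [lcoef_eq]
  exact div_nonneg (prod_range_add_one_sub_nonneg hα n) (Nat.cast_nonneg _)

theorem delta_eq (α lam τ : ℝ) (v : ℕ → ℝ) (n : ℕ) :
    delta α lam τ v n = τ ^ (-α) * Real.exp (α / 2 * lam * τ) *
      ∑ k ∈ range (n + 1), g α k * (Real.exp (-(k * lam * τ)) * v (n - k)) := by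
  rw [delta, mul_assoc, mul_sum _ _ (Real.exp _)]
  refine congrArg (τ ^ (-α) * ·) (sum_congr rfl fun k _ => ?_)
  rw [show -((k : ℝ) - α / 2) * lam * τ = α / 2 * lam * τ + -(k * lam * τ) by ring, Real.exp_add]
  ring

theorem delta_two_mul_sq (α lam τ : ℝ) (v : ℕ → ℝ) (n : ℕ) :
    delta α (2 * lam) τ (fun k => v k ^ 2) n = τ ^ (-α) * Real.exp (α / 2 * lam * τ) ^ 2 *
      ∑ k ∈ range (n + 1), g α k * (Real.exp (-(k * lam * τ)) * v (n - k)) ^ 2 := by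
  rw [delta, mul_assoc, mul_sum _ _ (Real.exp _ ^ 2)]
  refine congrArg (τ ^ (-α) * ·) (sum_congr rfl fun k _ => ?_)
  rw [← Real.exp_nat_mul, mul_pow, ← Real.exp_nat_mul,
    show -((k : ℝ) - α / 2) * (2 * lam) * τ = (2 : ℕ) * (α / 2 * lam * τ) + (2 : ℕ) * -(k * lam * τ)
      by push_cast; ring, Real.exp_add]
  ring

theorem stmt_12_general (α lam τ : ℝ) (hα0 : 0 < α) (hα1 : α < 1) (hτ : 0 < τ)
    (v : ℕ → ℝ) (n : ℕ) :
    v n * delta α lam τ v n ≥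
      (1 / 2) * Real.exp (-(α / 2) * lam * τ) * delta α (2 * lam) τ (fun k => (v k) ^ 2) n +
        (Real.exp (-(α / 2) * lam * τ) / (2 * lcoef α 0)) * τ ^ α *
          (delta α lam τ v n) ^ 2 := by
  set x : ℕ → ℝ := fun k => Real.exp (-(k * lam * τ)) * v (n - k) with hx
  have key := sq_sum_mul_add_sum_mul_sq_le (c := g α) (x := x) (n := n) (g_zero α)
    (fun k _ => g_succ_nonpos hα0.le hα1.le k) (lcoef_nonneg hα1.le n)
  have hx₀ : x 0 = v n := by simp [hx]
  set P := τ ^ (-α) with hP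
  set E := Real.exp (α / 2 * lam * τ) with hE
  have hP_pos : 0 < P := Real.rpow_pos_of_pos hτ _
  have hE_pos : 0 < E := Real.exp_pos _
  have hτα : τ ^ α = P⁻¹ := by rw [hP, Real.rpow_neg hτ.le, inv_inv]
  have hE_inv : Real.exp (-(α / 2) * lam * τ) = E⁻¹ := by rw [hE, ← Real.exp_neg, neg_mul, neg_mul]
  rw [delta_eq, delta_two_mul_sq, hE_inv, hτα, lcoef_zero, ← hx₀, ge_iff_le]
  set S := ∑ k ∈ range (n + 1), g α k * x k
  set T := ∑ k ∈ range (n + 1), g α k * x k ^ 2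
  calc 1 / 2 * E⁻¹ * (P * E ^ 2 * T) + E⁻¹ / (2 * 1) * P⁻¹ * (P * E * S) ^ 2
      = P * E * (S ^ 2 + T) / 2 := by field_simp; ring
    _ ≤ P * E * (2 * x 0 * S) / 2 := by gcongr
    _ = x 0 * (P * E * S) := by ring

theorem stmt_12 (α lam τ : ℝ) (hα0 : 0 < α) (hα1 : α < 1) (hτ : 0 < τ)
    (v : ℕ → ℝ) (n : ℕ) (hn : 1 ≤ n) :
    v n * delta α lam τ v n ≥
      (1 / 2) * Real.exp (-(α / 2) * lam * τ) * delta α (2 * lam) τ (fun k => (v k) ^ 2) n +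
        (Real.exp (-(α / 2) * lam * τ) / (2 * lcoef α 0)) * τ ^ α *
          (delta α lam τ v n) ^ 2 :=
  stmt_12_general α lam τ hα0 hα1 hτ v n
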